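/- arXiv:2009.12008 — 2 statements merged into one kernel-verified Lean document; each statement's English description precedes it below -/
import Mathlib

section
/- (Cheeger-type lower bound, Loewner form.) Let (G,W) be a d-regular matrix-weighted graph with k×k weight matrices and d > 0, with Laplacian eigenvalues 0 = λ_1 = … = λ_k ≤ λ_{k+1} ≤ … ≤ λ_{nk}. Then for every vertex subset S with ∅ ≠ S ≠ V, the k×k matrix h^⪯(S) = E(S, V∖S) / (d · min(|S|, |V∖S|)) satisfies h^⪯(S) ⪰ (λ_{k+1}/(2d))·I_k in the Loewner order; that is, h^⪯(S) − (λ_{k+1}/(2d))·I_k is positive semidefinite. -/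
open Matrix Finset

noncomputable section

/-- The adjacency matrix of a matrix-weighted graph: the `kn × kn` block matrix
whose `(u,v)` block is the weight matrix `W u v`. -/
def mwAdj (n k : ℕ) (W : Fin n → Fin n → Matrix (Fin k) (Fin k) ℝ) :
    Matrix (Fin n × Fin k) (Fin n × Fin k) ℝ :=
  fun p q => W p.1 q.1 p.2 q.2

/-- The degree matrix of a matrix-weighted graph: block diagonal, with
`(v,v)` block `D_v = ∑ u, W u v`. -/
def mwDeg (n k : ℕ) (W : Fin n → Fin n → Matrix (Fin k) (Fin k) ℝ) :
    Matrix (Fin n × Fin k) (Fin n × Fin k) ℝ :=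
  fun p q => if p.1 = q.1 then (∑ u, W u p.1) p.2 q.2 else 0

/-- The Laplacian `L = D - A` of a matrix-weighted graph. -/
def mwLap (n k : ℕ) (W : Fin n → Fin n → Matrix (Fin k) (Fin k) ℝ) :
    Matrix (Fin n × Fin k) (Fin n × Fin k) ℝ :=
  mwDeg n k W - mwAdj n k W

/-- The matrix-weighted edge count between vertex subsets `S` and `T`:
`E(S,T) = ∑_{s ∈ S, t ∈ T} W s t`, a `k × k` matrix. -/
def mwEdge (n k : ℕ) (W : Fin n → Fin n → Matrix (Fin k) (Fin k) ℝ)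
    (S T : Finset (Fin n)) : Matrix (Fin k) (Fin k) ℝ :=
  ∑ s ∈ S, ∑ t ∈ T, W s t

/-!
Put `y = σ ⊗ x`, where `σ` is `|Sᶜ|` on `S` and `-|S|` off `S`. Since `∑ σ = 0`, `y` is orthogonal
to the block-constant vectors; these lie in the kernel of `L`, and when `λ_{k+1} > 0` a dimension
count shows that they span exactly the first `k` eigenvectors, so `λ_{k+1} |y|² ≤ yᵀ L y`.
The identity `2 yᵀ L y = ∑_{u,v} (y_u - y_v)ᵀ W(u,v) (y_u - y_v)` evaluates the right side as
`(|S| + |Sᶜ|)² xᵀ E(S,Sᶜ) x`, while `|y|² = |S| |Sᶜ| (|S| + |Sᶜ|) |x|²`, and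
`|S| |Sᶜ| / (|S| + |Sᶜ|) ≥ min(|S|, |Sᶜ|) / 2`. If `λ_{k+1} ≤ 0` the claim follows from
`E(S,Sᶜ) ⪰ 0`.
-/

section Spectral

variable {ι : Type*} [Fintype ι] [DecidableEq ι] {U : Matrix ι ι ℝ} (μ : ι → ℝ)

theorem dotProduct_conj_diagonal_mulVec (y : ι → ℝ) :
    y ⬝ᵥ (U * diagonal μ * Uᵀ) *ᵥ y = ∑ p, μ p * (Uᵀ *ᵥ y) p ^ 2 := by
  rw [← mulVec_mulVec, ← mulVec_mulVec, dotProduct_mulVec, ← mulVec_transpose]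
  simp only [dotProduct, mulVec_diagonal]
  exact sum_congr rfl fun p _ => by ring

theorem dotProduct_self_eq_sum_sq (hU : U * Uᵀ = 1) (y : ι → ℝ) :
    y ⬝ᵥ y = ∑ p, (Uᵀ *ᵥ y) p ^ 2 := by
  simpa [hU] using dotProduct_conj_diagonal_mulVec (U := U) 1 y

theorem eq_sum_smul_of_mul_transpose_eq_one (hU : U * Uᵀ = 1) (y : ι → ℝ) :
    y = ∑ p, (Uᵀ *ᵥ y) p • Uᵀ p := by
  conv_lhs => rw [← one_mulVec y, ← hU, ← mulVec_mulVec]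
  ext q
  simp [mulVec, dotProduct, Finset.sum_apply, mul_comm]

variable {μ}

theorem mul_dotProduct_self_le (hU : U * Uᵀ = 1) {K : Set ι} {c : ℝ}
    (hc : ∀ p ∉ K, c ≤ μ p) {y : ι → ℝ} (hy : ∀ p ∈ K, (Uᵀ *ᵥ y) p = 0) :
    c * (y ⬝ᵥ y) ≤ y ⬝ᵥ (U * diagonal μ * Uᵀ) *ᵥ y := by
  rw [dotProduct_self_eq_sum_sq hU, dotProduct_conj_diagonal_mulVec, mul_sum]
  refine sum_le_sum fun p _ => ?_
  by_cases hp : p ∈ K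
  · simp [hy p hp]
  · exact mul_le_mul_of_nonneg_right (hc p hp) (sq_nonneg _)

theorem mem_span_of_dotProduct_mulVec_eq_zero (hU : U * Uᵀ = 1) {K : Set ι}
    (hμ : 0 ≤ μ) (hK : ∀ p ∉ K, 0 < μ p) {y : ι → ℝ}
    (hy : y ⬝ᵥ (U * diagonal μ * Uᵀ) *ᵥ y = 0) :
    y ∈ Submodule.span ℝ (Set.range fun p : K => Uᵀ p) := by
  rw [dotProduct_conj_diagonal_mulVec] at hy
  have hterm := (sum_eq_zero_iff_of_nonneg fun q _ => mul_nonneg (hμ q) (sq_nonneg _)).1 hy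
  rw [eq_sum_smul_of_mul_transpose_eq_one hU y]
  refine Submodule.sum_mem _ fun p _ => ?_
  by_cases hp : p ∈ K
  · exact Submodule.smul_mem _ _ (Submodule.subset_span ⟨⟨p, hp⟩, rfl⟩)
  · have : (Uᵀ *ᵥ y) p = 0 := by simpa [(hK p hp).ne'] using hterm p (mem_univ p)
    simp [this]

end Spectral

theorem tensor_dotProduct_tensor {α β : Type*} [Fintype α] [Fintype β] (a c : α → ℝ)
    (b e : β → ℝ) :
    (fun p : α × β => a p.1 * b p.2) ⬝ᵥ (fun p => c p.1 * e p.2) = (a ⬝ᵥ c) * (b ⬝ᵥ e) := by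
  simp only [dotProduct, Fintype.sum_prod_type, sum_mul_sum]
  exact sum_congr rfl fun _ _ => sum_congr rfl fun _ _ => by ring

section Cut

variable {α : Type*} [Fintype α] [DecidableEq α] (S : Finset α)

def cutVec : α → ℝ := fun v => if v ∈ S then (#Sᶜ : ℝ) else -(#S : ℝ)

theorem sum_cutVec : ∑ v, cutVec S v = 0 := by
  have hnot : ∀ u ∈ Sᶜ, u ∉ S := fun u => mem_compl.1
  rw [← sum_add_sum_compl S]
  simp +contextual [cutVec, hnot]
  ring

theorem cutVec_dotProduct_self :
    cutVec S ⬝ᵥ cutVec S = #S * #Sᶜ * (#S + #Sᶜ) := by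
  have hnot : ∀ u ∈ Sᶜ, u ∉ S := fun u => mem_compl.1
  rw [dotProduct, ← sum_add_sum_compl S]
  simp +contextual [cutVec, hnot]
  ring

theorem sum_sum_sq_sub_ite_mul (a b : ℝ) {Q : α → α → ℝ} (hQ : ∀ u v, Q u v = Q v u) :
    ∑ u, ∑ v, ((if u ∈ S then a else b) - (if v ∈ S then a else b)) ^ 2 * Q u v =
      2 * (a - b) ^ 2 * ∑ u ∈ S, ∑ v ∈ Sᶜ, Q u v := by
  have hsplit : ∀ f : α → ℝ, ∑ u, f u = ∑ u ∈ S, f u + ∑ u ∈ Sᶜ, f u :=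
    fun f => (sum_add_sum_compl S f).symm
  have hswap : ∑ u ∈ Sᶜ, ∑ v ∈ S, Q u v = ∑ u ∈ S, ∑ v ∈ Sᶜ, Q u v := by
    rw [sum_comm]; simp only [hQ]
  have hnot : ∀ u ∈ Sᶜ, u ∉ S := fun u => mem_compl.1
  simp +contextual only [hsplit, sum_add_distrib, hnot, if_true, if_false, sub_self,
    ← mul_sum]
  rw [hswap]
  ring

end Cut

section MatrixWeightedGraph

variable {n k : ℕ} {W : Fin n → Fin n → Matrix (Fin k) (Fin k) ℝ}

open Function

theorem dotProduct_mwAdj_mulVec (y : Fin n × Fin k → ℝ) :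
    y ⬝ᵥ mwAdj n k W *ᵥ y = ∑ u, ∑ v, curry y u ⬝ᵥ W u v *ᵥ curry y v := by
  simp only [dotProduct, mulVec, mwAdj, Fintype.sum_prod_type, mul_sum, curry_apply]
  refine sum_congr rfl fun u _ => ?_
  rw [sum_comm]

theorem mwDeg_mulVec_apply (y : Fin n × Fin k → ℝ) (v : Fin n) (i : Fin k) :
    (mwDeg n k W *ᵥ y) (v, i) = ((∑ u, W u v) *ᵥ curry y v) i := by
  simp [mulVec, dotProduct, mwDeg, Fintype.sum_prod_type, ite_mul]

theorem dotProduct_mwDeg_mulVec (y : Fin n × Fin k → ℝ) :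
    y ⬝ᵥ mwDeg n k W *ᵥ y = ∑ u, ∑ v, curry y v ⬝ᵥ W u v *ᵥ curry y v := by
  rw [sum_comm]
  simp only [← dotProduct_sum, ← sum_mulVec]
  simp [dotProduct, Fintype.sum_prod_type, mwDeg_mulVec_apply]

theorem two_mul_dotProduct_mwLap_mulVec (hsym : ∀ u v, W u v = W v u)
    (y : Fin n × Fin k → ℝ) :
    2 * (y ⬝ᵥ mwLap n k W *ᵥ y) =
      ∑ u, ∑ v, (curry y u - curry y v) ⬝ᵥ W u v *ᵥ (curry y u - curry y v) := by
  have hswap : ∀ f : Fin n → Fin n → ℝ, ∑ u, ∑ v, f u v = ∑ u, ∑ v, f v u := fun f => sum_comm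
  simp only [mulVec_sub, dotProduct_sub, sub_dotProduct, sum_sub_distrib]
  rw [mwLap, sub_mulVec, dotProduct_sub, dotProduct_mwAdj_mulVec, dotProduct_mwDeg_mulVec,
    hswap fun u v => curry y u ⬝ᵥ W u v *ᵥ curry y u,
    hswap fun u v => curry y v ⬝ᵥ W u v *ᵥ curry y u]
  simp only [hsym _ _]
  ring

theorem two_mul_dotProduct_mwLap_mulVec_tensor (hsym : ∀ u v, W u v = W v u)
    (σ : Fin n → ℝ) (x : Fin k → ℝ) :
    2 * ((fun p => σ p.1 * x p.2) ⬝ᵥ mwLap n k W *ᵥ fun p => σ p.1 * x p.2) =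
      ∑ u, ∑ v, (σ u - σ v) ^ 2 * (x ⬝ᵥ W u v *ᵥ x) := by
  rw [two_mul_dotProduct_mwLap_mulVec hsym]
  have hblock : ∀ u v, curry (fun p : Fin n × Fin k => σ p.1 * x p.2) u -
      curry (fun p : Fin n × Fin k => σ p.1 * x p.2) v = (σ u - σ v) • x := by
    intro u v; ext i; simp [sub_mul]
  simp only [hblock, mulVec_smul, dotProduct_smul, smul_dotProduct, smul_eq_mul]
  exact sum_congr rfl fun _ _ => sum_congr rfl fun _ _ => by ring

theorem dotProduct_mwLap_mulVec_blockConst (hsym : ∀ u v, W u v = W v u) (g : Fin k → ℝ) :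
    (fun p : Fin n × Fin k => g p.2) ⬝ᵥ mwLap n k W *ᵥ (fun p => g p.2) = 0 := by
  simpa using two_mul_dotProduct_mwLap_mulVec_tensor hsym 1 g

theorem dotProduct_mwEdge_mulVec (S T : Finset (Fin n)) (x : Fin k → ℝ) :
    x ⬝ᵥ mwEdge n k W S T *ᵥ x = ∑ s ∈ S, ∑ t ∈ T, x ⬝ᵥ W s t *ᵥ x := by
  simp only [mwEdge, sum_mulVec, dotProduct_sum]

theorem posSemidef_mwEdge (hpsd : ∀ u v, (W u v).PosSemidef) (S T : Finset (Fin n)) :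
    (mwEdge n k W S T).PosSemidef :=
  posSemidef_sum S fun s _ => posSemidef_sum T fun t _ => hpsd s t

end MatrixWeightedGraph

theorem mul_dotProduct_self_le_dotProduct_mwLap_mulVec {n k : ℕ}
    {W : Fin n → Fin n → Matrix (Fin k) (Fin k) ℝ} (hsym : ∀ u v, W u v = W v u)
    {lam : ℕ → ℝ} (hlam : MonotoneOn lam (Set.Iio (n * k))) (hzero : ∀ i < k, lam i = 0)
    {U : Matrix (Fin n × Fin k) (Fin n × Fin k) ℝ} (hU : U * Uᵀ = 1)
    (hLW : mwLap n k W = U * diagonal (fun p => lam (finProdFinEquiv p)) * Uᵀ)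
    (hn : 0 < n) (hpos : 0 < lam k) {y : Fin n × Fin k → ℝ}
    (hy : ∀ g : Fin k → ℝ, (fun p => g p.2) ⬝ᵥ y = 0) :
    lam k * (y ⬝ᵥ y) ≤ y ⬝ᵥ mwLap n k W *ᵥ y := by
  set e := @finProdFinEquiv n k
  set K : Set (Fin n × Fin k) := {p | (e p : ℕ) < k}
  have hge : ∀ p ∉ K, lam k ≤ lam (e p) := fun p hp =>
    hlam (lt_of_le_of_lt (not_lt.1 hp) (e p).2) (e p).2 (not_lt.1 hp)
  have hnonneg : 0 ≤ fun p => lam (e p) := fun p => by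
    by_cases hp : p ∈ K
    · exact (hzero _ hp).ge
    · exact hpos.le.trans (hge p hp)
  set C := LinearMap.range (LinearMap.funLeft ℝ ℝ (Prod.snd : Fin n × Fin k → Fin k))
  have hCle : C ≤ Submodule.span ℝ (Set.range fun p : K => Uᵀ p) := by
    rintro _ ⟨g, rfl⟩
    refine mem_span_of_dotProduct_mulVec_eq_zero hU hnonneg
      (fun p hp => hpos.trans_le (hge p hp)) ?_
    rw [← hLW]
    exact dotProduct_mwLap_mulVec_blockConst hsym g
  have hrank : Module.finrank ℝ (Submodule.span ℝ (Set.range fun p : K => Uᵀ p)) ≤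
      Module.finrank ℝ C := by
    have : Nonempty (Fin n) := ⟨⟨0, hn⟩⟩
    rw [LinearMap.finrank_range_of_inj
      (LinearMap.funLeft_injective_of_surjective ℝ ℝ _ Prod.snd_surjective),
      Module.finrank_fintype_fun_eq_card, Fintype.card_fin]
    refine (finrank_range_le_card _).trans ?_
    simpa using Fintype.card_le_of_injective (fun p : K => (⟨e p, p.2⟩ : Fin k))
      fun p q hpq => Subtype.ext (e.injective (Fin.ext (Fin.mk.inj_iff.1 hpq)))
  have hCeq := Submodule.eq_of_le_of_finrank_le hCle hrank
  rw [hLW]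
  refine mul_dotProduct_self_le hU hge fun p hp => ?_
  obtain ⟨g, hg⟩ : Uᵀ p ∈ C := hCeq ▸ Submodule.subset_span ⟨⟨p, hp⟩, rfl⟩
  rw [← hy g]
  exact congrArg (· ⬝ᵥ y) hg.symm

theorem mul_min_mul_le_of_mul_le {l s t X q : ℝ} (hl : 0 ≤ l) (hs : 0 < s) (ht : 0 < t)
    (hX : 0 ≤ X) (h : l * (s * t * (s + t) * X) ≤ (s + t) ^ 2 * q) :
    l * min s t * X ≤ 2 * q := by
  have hmin : min s t * (s + t) ≤ 2 * (s * t) := by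
    rcases le_total s t with hle | hle
    · rw [min_eq_left hle]; nlinarith
    · rw [min_eq_right hle]; nlinarith
  have hst : 0 < s + t := by positivity
  refine le_of_mul_le_mul_left ?_ (pow_pos hst 2)
  calc (s + t) ^ 2 * (l * min s t * X) = (s + t) * (l * X) * (min s t * (s + t)) := by ring
    _ ≤ (s + t) * (l * X) * (2 * (s * t)) := by gcongr
    _ = 2 * (l * (s * t * (s + t) * X)) := by ring
    _ ≤ (s + t) ^ 2 * (2 * q) := by linarith

theorem lam_mul_min_card_mul_le_two_mul_dotProduct_mwEdge {n k : ℕ}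
    {W : Fin n → Fin n → Matrix (Fin k) (Fin k) ℝ} (hpsd : ∀ u v, (W u v).PosSemidef)
    (hsym : ∀ u v, W u v = W v u)
    {lam : ℕ → ℝ} (hlam : MonotoneOn lam (Set.Iio (n * k))) (hzero : ∀ i < k, lam i = 0)
    {U : Matrix (Fin n × Fin k) (Fin n × Fin k) ℝ} (hU : U * Uᵀ = 1)
    (hLW : mwLap n k W = U * diagonal (fun p => lam (finProdFinEquiv p)) * Uᵀ)
    {S : Finset (Fin n)} (hS : S.Nonempty) (hSc : Sᶜ.Nonempty) (x : Fin k → ℝ) :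
    lam k * min (#S : ℝ) #Sᶜ * (x ⬝ᵥ x) ≤ 2 * (x ⬝ᵥ mwEdge n k W S Sᶜ *ᵥ x) := by
  have hq := (posSemidef_mwEdge hpsd S Sᶜ).dotProduct_mulVec_nonneg x
  rw [star_trivial] at hq
  have hX : 0 ≤ x ⬝ᵥ x := by simpa using dotProduct_star_self_nonneg x
  rcases le_or_gt (lam k) 0 with hlk | hlk
  · have : lam k * min (#S : ℝ) #Sᶜ ≤ 0 :=
      mul_nonpos_of_nonpos_of_nonneg hlk (le_min (by positivity) (by positivity))
    linarith [mul_nonpos_of_nonpos_of_nonneg this hX]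
  have hs : (0 : ℝ) < #S := by exact_mod_cast hS.card_pos
  have ht : (0 : ℝ) < #Sᶜ := by exact_mod_cast hSc.card_pos
  have hn : 0 < n := by simpa using hS.card_pos.trans_le (card_le_univ S)
  have hy : ∀ g : Fin k → ℝ,
      (fun p : Fin n × Fin k => g p.2) ⬝ᵥ (fun p => cutVec S p.1 * x p.2) = 0 := fun g => by
    simpa [one_dotProduct, sum_cutVec] using tensor_dotProduct_tensor 1 (cutVec S) g x
  have hgap := mul_dotProduct_self_le_dotProduct_mwLap_mulVec hsym hlam hzero hU hLW hn hlk hy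
  have hLy : 2 * ((fun p => cutVec S p.1 * x p.2) ⬝ᵥ mwLap n k W *ᵥ fun p => cutVec S p.1 * x p.2)
      = 2 * ((#S + #Sᶜ) ^ 2 * (x ⬝ᵥ mwEdge n k W S Sᶜ *ᵥ x)) := by
    rw [two_mul_dotProduct_mwLap_mulVec_tensor hsym]
    unfold cutVec
    rw [sum_sum_sq_sub_ite_mul S _ _ fun u v => by rw [hsym], dotProduct_mwEdge_mulVec]
    ring
  rw [tensor_dotProduct_tensor, cutVec_dotProduct_self,
    ← mul_le_mul_iff_right₀ two_pos, hLy, mul_le_mul_iff_right₀ two_pos] at hgap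
  exact mul_min_mul_le_of_mul_le hlk.le hs ht hX hgap

-- `lam` is 0-indexed, so `lam k` is `λ_{k+1}`.
theorem matrix_weighted_cheeger_loewner_lower_bound_general
    (n k : ℕ) (d : ℝ) (hd : 0 < d)
    (W : Fin n → Fin n → Matrix (Fin k) (Fin k) ℝ)
    (hpsd : ∀ u v, (W u v).PosSemidef)
    (hsym : ∀ u v, W u v = W v u)
    (lam : ℕ → ℝ) (hlam : MonotoneOn lam (Set.Iio (n * k)))
    (hzero : ∀ i < k, lam i = 0)
    (U : Matrix (Fin n × Fin k) (Fin n × Fin k) ℝ) (hU : U * Uᵀ = 1)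
    (hLW : mwLap n k W =
      U * Matrix.diagonal (fun p => lam (finProdFinEquiv p)) * Uᵀ) :
    ∀ S : Finset (Fin n), S.Nonempty → S ≠ Finset.univ →
      ((d * min (S.card : ℝ) (Sᶜ.card : ℝ))⁻¹ • mwEdge n k W S Sᶜ -
        (lam k / (2 * d)) • (1 : Matrix (Fin k) (Fin k) ℝ)).PosSemidef := by
  intro S hS hSu
  have hSc : Sᶜ.Nonempty := nonempty_iff_ne_empty.2 ((compl_eq_empty_iff S).not.2 hSu)
  have hm : 0 < min (#S : ℝ) #Sᶜ :=
    lt_min (by exact_mod_cast hS.card_pos) (by exact_mod_cast hSc.card_pos)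
  refine posSemidef_iff_dotProduct_mulVec.2 ⟨((posSemidef_mwEdge hpsd S Sᶜ).isHermitian.smul
    (.all _)).sub (isHermitian_one.smul (.all _)), fun x => ?_⟩
  have hcut :=
    lam_mul_min_card_mul_le_two_mul_dotProduct_mwEdge hpsd hsym hlam hzero hU hLW hS hSc x
  simp only [star_trivial, sub_mulVec, smul_mulVec, one_mulVec, dotProduct_sub, dotProduct_smul,
    smul_eq_mul]
  have hrhs : lam k / (2 * d) * (x ⬝ᵥ x) =
      (d * min (#S : ℝ) #Sᶜ)⁻¹ * (lam k * min (#S : ℝ) #Sᶜ * (x ⬝ᵥ x) / 2) := by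
    field_simp
  rw [hrhs, sub_nonneg]
  exact mul_le_mul_of_nonneg_left (by linarith) (by positivity)

/-- Cheeger-type lower bound, Loewner form: for a `d`-regular matrix-weighted
graph (`d > 0`) and every vertex subset `S` with `∅ ≠ S ≠ V`, the matrix Cheeger
ratio `h^⪯(S) = E(S, V∖S) / (d min(|S|, |V∖S|))` satisfies
`h^⪯(S) ⪰ (λ_{k+1}/(2d)) I_k` in the Loewner order, i.e.
`h^⪯(S) - (λ_{k+1}/(2d)) I_k` is positive semidefinite.  Here `lam` enumerates
the Laplacian eigenvalues in increasing order (0-indexed), with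
`λ_1 = ⋯ = λ_k = 0`, witnessed by an orthogonal spectral decomposition. -/
theorem matrix_weighted_cheeger_loewner_lower_bound
    (n k : ℕ) (d : ℝ) (hd : 0 < d) (G : SimpleGraph (Fin n))
    (W : Fin n → Fin n → Matrix (Fin k) (Fin k) ℝ)
    (hpsd : ∀ u v, (W u v).PosSemidef)
    (hsym : ∀ u v, W u v = W v u)
    (h0 : ∀ u v, ¬ G.Adj u v → W u v = 0)
    (hreg : ∀ v : Fin n, ∑ u, W u v = d • (1 : Matrix (Fin k) (Fin k) ℝ))
    (lam : ℕ → ℝ) (hlam : MonotoneOn lam (Set.Iio (n * k)))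
    (hzero : ∀ i < k, lam i = 0)
    (U : Matrix (Fin n × Fin k) (Fin n × Fin k) ℝ) (hU : U * Uᵀ = 1)
    (hLW : mwLap n k W =
      U * Matrix.diagonal (fun p => lam (finProdFinEquiv p)) * Uᵀ) :
    ∀ S : Finset (Fin n), S.Nonempty → S ≠ Finset.univ →
      ((d * min (S.card : ℝ) (Sᶜ.card : ℝ))⁻¹ • mwEdge n k W S Sᶜ -
        (lam k / (2 * d)) • (1 : Matrix (Fin k) (Fin k) ℝ)).PosSemidef :=
  matrix_weighted_cheeger_loewner_lower_bound_general n k d hd W hpsd hsym lam hlam hzero U hU hLW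
end
end

section
/- Let G be an r-regular finite simple graph on n vertices, and let (G,W) be a matrix-weighted graph on G whose every weight matrix W(u,v) (for u adjacent to v) is a k×k orthogonal projection of rank ℓ, and which is d-regular with d = rℓ/k. Let μ_1 ≥ … ≥ μ_{nk} be the adjacency eigenvalues of (G,W) and let μ_2(A_G) be the second-largest adjacency eigenvalue of the unweighted graph G. Then μ_{k+1}(A_W) ≥ (ℓ/k)·μ_2(A_G). -/
/-!
Take `x ⊥ 1` in the span of the top two eigenvectors of `A_G`, so that
`xᵀ A_G x ≥ μ₂(A_G) |x|²`. Since `tr W(u,v) = ℓ · A_G(u,v)`, the quadratic forms of `A_W` at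
the `k` vectors `x ⊗ eᵢ` add up to `ℓ · xᵀ A_G x`, so one of them is at least
`(ℓ/k) μ₂(A_G) |x|²`. By `d`-regularity every `1 ⊗ c` is an eigenvector of `A_W` for `d`, and it
is orthogonal to `x ⊗ eᵢ`; as `μ₂(A_G) ≤ r` gives `(ℓ/k) μ₂(A_G) ≤ d`, the Rayleigh quotient of
`A_W` is at least `(ℓ/k) μ₂(A_G)` on the `(k+1)`-dimensional space spanned by the `1 ⊗ c` and
`x ⊗ eᵢ`, and Courant–Fischer bounds `μ_{k+1}(A_W)` from below by it.
-/

open Matrix Finset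

noncomputable section

theorem dotProduct_self_pos_iff {ι : Type*} [Fintype ι] {v : ι → ℝ} : 0 < v ⬝ᵥ v ↔ v ≠ 0 := by
  simpa using dotProduct_self_star_pos_iff (v := v)

section Spectral

variable {R ι : Type*} [CommRing R] [Fintype ι] [DecidableEq ι]

theorem dotProduct_mul_diagonal_mul_transpose_mulVec (U : Matrix ι ι R) (d : ι → R)
    (z : ι → R) :
    z ⬝ᵥ (U * diagonal d * Uᵀ) *ᵥ z = ∑ p, d p * (Uᵀ *ᵥ z) p * (Uᵀ *ᵥ z) p := by
  rw [← mulVec_mulVec, ← mulVec_mulVec, dotProduct_mulVec, ← mulVec_transpose]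
  simp only [dotProduct, mulVec_diagonal]
  exact Finset.sum_congr rfl fun p _ => by ring

theorem transpose_mulVec_dotProduct_self {U : Matrix ι ι R} (hU : U * Uᵀ = 1) (z : ι → R) :
    (Uᵀ *ᵥ z) ⬝ᵥ (Uᵀ *ᵥ z) = z ⬝ᵥ z := by
  rw [dotProduct_mulVec, ← mulVec_transpose, transpose_transpose, mulVec_mulVec, hU, one_mulVec]

theorem isSymm_mul_diagonal_mul_transpose (U : Matrix ι ι R) (d : ι → R) :
    (U * diagonal d * Uᵀ).IsSymm := by
  simp [IsSymm, transpose_mul, Matrix.mul_assoc]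

end Spectral

section CourantFischer

variable {ι : Type*} [Fintype ι] [DecidableEq ι] {N : ℕ} (e : ι ≃ Fin N) {μ : ℕ → ℝ}
  {U : Matrix ι ι ℝ} {k : ℕ}

theorem dotProduct_mulVec_le_of_forall_lt (hμ : AntitoneOn μ (Set.Iio N)) (hU : U * Uᵀ = 1)
    (hk : k < N) {z : ι → ℝ} (hz : ∀ p, (e p : ℕ) < k → (Uᵀ *ᵥ z) p = 0) :
    z ⬝ᵥ (U * diagonal (fun p => μ (e p)) * Uᵀ) *ᵥ z ≤ μ k * (z ⬝ᵥ z) := by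
  rw [dotProduct_mul_diagonal_mul_transpose_mulVec, ← transpose_mulVec_dotProduct_self hU,
    dotProduct, Finset.mul_sum]
  refine Finset.sum_le_sum fun p _ => ?_
  rcases lt_or_ge (e p : ℕ) k with hp | hp
  · simp [hz p hp]
  · rw [mul_assoc]
    exact mul_le_mul_of_nonneg_right (hμ hk (e p).isLt hp) (mul_self_nonneg _)

theorem le_dotProduct_mulVec_of_forall_gt (hμ : AntitoneOn μ (Set.Iio N)) (hU : U * Uᵀ = 1)
    (hk : k < N) {z : ι → ℝ} (hz : ∀ p, k < (e p : ℕ) → (Uᵀ *ᵥ z) p = 0) :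
    μ k * (z ⬝ᵥ z) ≤ z ⬝ᵥ (U * diagonal (fun p => μ (e p)) * Uᵀ) *ᵥ z := by
  rw [dotProduct_mul_diagonal_mul_transpose_mulVec, ← transpose_mulVec_dotProduct_self hU,
    dotProduct, Finset.mul_sum]
  refine Finset.sum_le_sum fun p _ => ?_
  rcases lt_or_ge k (e p : ℕ) with hp | hp
  · simp [hz p hp]
  · rw [mul_assoc]
    exact mul_le_mul_of_nonneg_right (hμ (e p).isLt hk hp) (mul_self_nonneg _)

theorem le_of_forall_mem_le_dotProduct_mulVec (hμ : AntitoneOn μ (Set.Iio N))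
    (hU : U * Uᵀ = 1) {A : Matrix ι ι ℝ} (hA : A = U * diagonal (fun p => μ (e p)) * Uᵀ)
    (V : Submodule ℝ (ι → ℝ)) (hV : k < Module.finrank ℝ V) {t : ℝ}
    (ht : ∀ z ∈ V, t * (z ⬝ᵥ z) ≤ z ⬝ᵥ A *ᵥ z) : t ≤ μ k := by
  have hk : k < N := by
    simpa [Fintype.card_congr e] using hV.trans_le (Submodule.finrank_le V)
  let coords : V →ₗ[ℝ] Fin k → ℝ :=
    LinearMap.funLeft ℝ ℝ (fun j => e.symm (Fin.castLE hk.le j)) ∘ₗ Uᵀ.mulVecLin ∘ₗ V.subtype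
  obtain ⟨⟨z, hzV⟩, hz, hz0⟩ := (Submodule.ne_bot_iff _).mp <|
    coords.ker_ne_bot_of_finrank_lt (by simpa using hV)
  have hz_top : ∀ p, (e p : ℕ) < k → (Uᵀ *ᵥ z) p = 0 := fun p hp => by
    simpa [coords, mulVec_transpose] using congrFun (LinearMap.mem_ker.mp hz) ⟨e p, hp⟩
  have hzz : 0 < z ⬝ᵥ z := dotProduct_self_pos_iff.mpr (by simpa using hz0)
  refine le_of_mul_le_mul_right ?_ hzz
  calc t * (z ⬝ᵥ z) ≤ z ⬝ᵥ A *ᵥ z := ht z hzV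
    _ ≤ μ k * (z ⬝ᵥ z) := hA ▸ dotProduct_mulVec_le_of_forall_lt e hμ hU hk hz_top

theorem exists_ne_zero_dotProduct_eq_zero_le (hμ : AntitoneOn μ (Set.Iio N))
    (hU : U * Uᵀ = 1) {A : Matrix ι ι ℝ} (hA : A = U * diagonal (fun p => μ (e p)) * Uᵀ)
    (hN : 1 < N) (w : ι → ℝ) : ∃ x ≠ 0, w ⬝ᵥ x = 0 ∧ μ 1 * (x ⬝ᵥ x) ≤ x ⬝ᵥ A *ᵥ x := by
  subst hA
  set p₀ := e.symm ⟨0, by omega⟩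
  set p₁ := e.symm ⟨1, hN⟩
  have hp₀₁ : p₀ ≠ p₁ := by simp [p₀, p₁]
  set ω := Uᵀ *ᵥ w
  obtain ⟨y, hy0, hωy, hy⟩ : ∃ y : ι → ℝ, y ≠ 0 ∧ ω ⬝ᵥ y = 0 ∧
      ∀ p, p ≠ p₀ → p ≠ p₁ → y p = 0 := by
    by_cases h : ω p₀ = 0
    · exact ⟨Pi.single p₀ 1, by simp, by simp [h], fun p hp _ => by simp [hp]⟩
    · refine ⟨ω p₁ • Pi.single p₀ 1 - ω p₀ • Pi.single p₁ 1, fun h' => h ?_, ?_,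
        fun p hp hp' => by simp [hp, hp']⟩
      · simpa [hp₀₁] using congrFun h' p₁
      · simp only [dotProduct_sub, dotProduct_smul, dotProduct_single, smul_eq_mul]
        ring
  have hUy : Uᵀ *ᵥ (U *ᵥ y) = y := by rw [mulVec_mulVec, mul_eq_one_comm.mp hU, one_mulVec]
  refine ⟨U *ᵥ y, fun h => hy0 (by rw [← hUy, h, mulVec_zero]), ?_, ?_⟩
  · rwa [dotProduct_mulVec, ← mulVec_transpose]
  · refine le_dotProduct_mulVec_of_forall_gt e hμ hU hN fun p hp => ?_
    rw [hUy]
    exact hy p (by rintro rfl; simp [p₀] at hp) (by rintro rfl; simp [p₁] at hp)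

end CourantFischer

theorem SimpleGraph.IsRegularOfDegree.dotProduct_adjMatrix_mulVec_le {V : Type*} [Fintype V]
    [DecidableEq V] {G : SimpleGraph V} [DecidableRel G.Adj] {r : ℕ}
    (hG : G.IsRegularOfDegree r) (x : V → ℝ) :
    x ⬝ᵥ G.adjMatrix ℝ *ᵥ x ≤ r * (x ⬝ᵥ x) := by
  have hL := (G.posSemidef_lapMatrix ℝ).dotProduct_mulVec_nonneg x
  rw [star_trivial, SimpleGraph.lapMatrix, sub_mulVec, dotProduct_sub,
    SimpleGraph.dotProduct_mulVec_degMatrix] at hL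
  simp only [hG.degree_eq, dotProduct, Finset.mul_sum, mul_assoc] at hL ⊢
  linarith

section Tensor

variable {R ι κ : Type*} [CommSemiring R]

def vecTensor (x : ι → R) (y : κ → R) : ι × κ → R := fun p => x p.1 * y p.2

theorem vecTensor_dotProduct_vecTensor [Fintype ι] [Fintype κ] (x x' : ι → R) (y y' : κ → R) :
    vecTensor x y ⬝ᵥ vecTensor x' y' = (x ⬝ᵥ x') * (y ⬝ᵥ y') := by
  simp only [vecTensor, dotProduct, Fintype.sum_prod_type, Finset.sum_mul_sum]
  exact Finset.sum_congr rfl fun _ _ => Finset.sum_congr rfl fun _ _ => by ring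

theorem vecTensor_smul_right (x : ι → R) (a : R) (y : κ → R) :
    vecTensor x (a • y) = a • vecTensor x y := by
  ext p
  simp only [vecTensor, Pi.smul_apply, smul_eq_mul]
  ring

theorem sum_single_dotProduct_mulVec_single [Fintype κ] [DecidableEq κ] (M : Matrix κ κ R) :
    ∑ i, Pi.single i 1 ⬝ᵥ M *ᵥ Pi.single i 1 = M.trace := by
  simp [single_dotProduct, trace]

end Tensor

theorem add_dotProduct_mulVec_add_of_vecMul_eq_smul {R ι : Type*} [CommRing R] [Fintype ι]
    {A : Matrix ι ι R} (hA : A.IsSymm) {a b : ι → R} {d : R} (ha : a ᵥ* A = d • a)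
    (hab : a ⬝ᵥ b = 0) : (a + b) ⬝ᵥ A *ᵥ (a + b) = d * (a ⬝ᵥ a) + b ⬝ᵥ A *ᵥ b := by
  have ha' : A *ᵥ a = d • a := by rw [← vecMul_transpose, hA.eq, ha]
  rw [mulVec_add, ha', add_dotProduct, dotProduct_add, dotProduct_add, dotProduct_mulVec a A b,
    ha]
  simp only [dotProduct_smul, smul_dotProduct, smul_eq_mul, hab, dotProduct_comm b a]
  ring

section TestSpace

variable {ι κ : Type*}

def oneTensorAddSMulTensor (x : ι → ℝ) (y : κ → ℝ) : (κ → ℝ) × ℝ →ₗ[ℝ] ι × κ → ℝ where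
  toFun cs := vecTensor 1 cs.1 + cs.2 • vecTensor x y
  map_add' cs cs' := by
    ext p
    simp only [vecTensor, Prod.fst_add, Prod.snd_add, Pi.add_apply, Pi.smul_apply, smul_eq_mul]
    ring
  map_smul' a cs := by
    ext p
    simp only [vecTensor, Prod.smul_fst, Prod.smul_snd, Pi.add_apply, Pi.smul_apply,
      smul_eq_mul, RingHom.id_apply]
    ring

variable {x : ι → ℝ} {y : κ → ℝ}

theorem oneTensorAddSMulTensor_apply (c : κ → ℝ) (s : ℝ) :
    oneTensorAddSMulTensor x y (c, s) = vecTensor 1 c + s • vecTensor x y := rfl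

theorem dotProduct_self_oneTensorAddSMulTensor [Fintype ι] [Fintype κ] (hx : 1 ⬝ᵥ x = 0)
    (c : κ → ℝ) (s : ℝ) :
    oneTensorAddSMulTensor x y (c, s) ⬝ᵥ oneTensorAddSMulTensor x y (c, s) =
      Fintype.card ι * (c ⬝ᵥ c) + s ^ 2 * ((x ⬝ᵥ x) * (y ⬝ᵥ y)) := by
  simp only [oneTensorAddSMulTensor_apply, add_dotProduct, dotProduct_add, dotProduct_smul,
    smul_dotProduct, vecTensor_dotProduct_vecTensor, one_dotProduct_one, hx, dotProduct_comm x 1,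
    smul_eq_mul]
  ring

theorem oneTensorAddSMulTensor_injective [Fintype ι] [Fintype κ] (hx : 1 ⬝ᵥ x = 0)
    (hx0 : x ≠ 0) (hy0 : y ≠ 0) : Function.Injective (oneTensorAddSMulTensor x y) := by
  refine (injective_iff_map_eq_zero _).mpr fun ⟨c, s⟩ h => ?_
  have hxx := dotProduct_self_pos_iff.mpr hx0
  have hyy := dotProduct_self_pos_iff.mpr hy0
  have hcc : 0 ≤ c ⬝ᵥ c := Finset.sum_nonneg fun j _ => mul_self_nonneg (c j)
  have hι : (0 : ℝ) < Fintype.card ι := by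
    obtain ⟨u, -⟩ := Function.ne_iff.mp hx0
    exact_mod_cast Fintype.card_pos_iff.mpr ⟨u⟩
  have hsum := dotProduct_self_oneTensorAddSMulTensor (y := y) hx c s
  rw [h, zero_dotProduct] at hsum
  have hs : s ^ 2 * ((x ⬝ᵥ x) * (y ⬝ᵥ y)) = 0 := by nlinarith [sq_nonneg s, mul_pos hxx hyy]
  have hc : c ⬝ᵥ c = 0 := by nlinarith [sq_nonneg s, mul_pos hxx hyy]
  have hs0 : s = 0 := by simpa [hxx.ne', hyy.ne'] using hs
  simp [dotProduct_self_eq_zero.mp hc, hs0]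

end TestSpace

section MatrixWeighted

variable {n k : ℕ} (W : Fin n → Fin n → Matrix (Fin k) (Fin k) ℝ)

theorem vecTensor_one_vecMul_mwAdj {D : Matrix (Fin k) (Fin k) ℝ} (hW : ∀ v, ∑ u, W u v = D)
    (c : Fin k → ℝ) : vecTensor 1 c ᵥ* mwAdj n k W = vecTensor 1 (c ᵥ* D) := by
  ext ⟨v, m⟩
  simp only [vecMul, dotProduct, vecTensor, mwAdj, Fintype.sum_prod_type, ← hW v,
    Matrix.sum_apply, Pi.one_apply, one_mul, Finset.mul_sum]
  exact Finset.sum_comm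

theorem vecTensor_dotProduct_mwAdj_mulVec (x : Fin n → ℝ) (y : Fin k → ℝ) :
    vecTensor x y ⬝ᵥ mwAdj n k W *ᵥ vecTensor x y =
      ∑ u, ∑ v, x u * x v * (y ⬝ᵥ W u v *ᵥ y) := by
  simp only [mulVec, dotProduct, vecTensor, mwAdj, Fintype.sum_prod_type, Finset.mul_sum]
  refine Finset.sum_congr rfl fun u _ => ?_
  rw [Finset.sum_comm]
  exact Finset.sum_congr rfl fun v _ => Finset.sum_congr rfl fun j _ =>
    Finset.sum_congr rfl fun m _ => by ring

theorem sum_vecTensor_single_dotProduct_mwAdj_mulVec {M : Matrix (Fin n) (Fin n) ℝ}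
    (hM : ∀ u v, (W u v).trace = M u v) (x : Fin n → ℝ) :
    ∑ i, vecTensor x (Pi.single i 1) ⬝ᵥ mwAdj n k W *ᵥ vecTensor x (Pi.single i 1) =
      x ⬝ᵥ M *ᵥ x := by
  have hquad : x ⬝ᵥ M *ᵥ x = ∑ u, ∑ v, x u * x v * M u v := by
    simp only [dotProduct, mulVec, Finset.mul_sum]
    exact Finset.sum_congr rfl fun _ _ => Finset.sum_congr rfl fun _ _ => by ring
  simp only [vecTensor_dotProduct_mwAdj_mulVec, hquad, ← hM,
    ← sum_single_dotProduct_mulVec_single, Finset.mul_sum]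
  rw [Finset.sum_comm]
  exact Finset.sum_congr rfl fun u _ => Finset.sum_comm

theorem oneTensorAddSMulTensor_dotProduct_mwAdj_mulVec (hW_symm : (mwAdj n k W).IsSymm) {d : ℝ}
    (hW : ∀ v, ∑ u, W u v = d • 1) {x : Fin n → ℝ} (hx : 1 ⬝ᵥ x = 0) (y : Fin k → ℝ)
    (c : Fin k → ℝ) (s : ℝ) :
    oneTensorAddSMulTensor x y (c, s) ⬝ᵥ mwAdj n k W *ᵥ oneTensorAddSMulTensor x y (c, s) =
      d * (n * (c ⬝ᵥ c)) + s ^ 2 * (vecTensor x y ⬝ᵥ mwAdj n k W *ᵥ vecTensor x y) := by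
  have h_eigen : vecTensor 1 c ᵥ* mwAdj n k W = d • vecTensor 1 c := by
    rw [vecTensor_one_vecMul_mwAdj W hW, vecMul_smul, vecMul_one, vecTensor_smul_right]
  have h_orth : vecTensor 1 c ⬝ᵥ s • vecTensor x y = 0 := by
    simp [vecTensor_dotProduct_vecTensor, hx]
  rw [oneTensorAddSMulTensor_apply, add_dotProduct_mulVec_add_of_vecMul_eq_smul hW_symm h_eigen
    h_orth, vecTensor_dotProduct_vecTensor, one_dotProduct_one]
  simp only [mulVec_smul, dotProduct_smul, smul_dotProduct, smul_eq_mul, Fintype.card_fin]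
  ring

theorem mul_dotProduct_self_le_dotProduct_mwAdj_mulVec (hW_symm : (mwAdj n k W).IsSymm)
    {d : ℝ} (hW : ∀ v, ∑ u, W u v = d • 1) {x : Fin n → ℝ} (hx : 1 ⬝ᵥ x = 0) {y : Fin k → ℝ}
    {t : ℝ} (htd : t ≤ d)
    (htx : t * ((x ⬝ᵥ x) * (y ⬝ᵥ y)) ≤ vecTensor x y ⬝ᵥ mwAdj n k W *ᵥ vecTensor x y) :
    ∀ z ∈ LinearMap.range (oneTensorAddSMulTensor x y), t * (z ⬝ᵥ z) ≤ z ⬝ᵥ mwAdj n k W *ᵥ z := by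
  rintro _ ⟨⟨c, s⟩, rfl⟩
  rw [dotProduct_self_oneTensorAddSMulTensor hx,
    oneTensorAddSMulTensor_dotProduct_mwAdj_mulVec W hW_symm hW hx, Fintype.card_fin]
  have hcc : 0 ≤ c ⬝ᵥ c := Finset.sum_nonneg fun j _ => mul_self_nonneg (c j)
  nlinarith [mul_le_mul_of_nonneg_right htd (mul_nonneg n.cast_nonneg hcc),
    mul_le_mul_of_nonneg_left htx (sq_nonneg s)]

end MatrixWeighted

/-- `mu` and `nu` list the eigenvalues of `A_W` and `A_G` in decreasing order starting at index
`0`, so `mu k` is `μ_{k+1}(A_W)` and `nu 1` is `μ₂(A_G)`. -/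
theorem matrix_weighted_alon_boppana_comparison_general
    (n k r ℓ : ℕ) (hn : 2 ≤ n) (hk : 0 < k)
    (G : SimpleGraph (Fin n)) [DecidableRel G.Adj]
    (hGreg : G.IsRegularOfDegree r)
    (W : Fin n → Fin n → Matrix (Fin k) (Fin k) ℝ)
    (h0 : ∀ u v, ¬ G.Adj u v → W u v = 0)
    (hrank : ∀ u v, G.Adj u v → (W u v).trace = (ℓ : ℝ))
    (hdreg : ∀ v : Fin n, ∑ u, W u v =
      ((r : ℝ) * ℓ / k) • (1 : Matrix (Fin k) (Fin k) ℝ))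
    (mu : ℕ → ℝ) (hmu : AntitoneOn mu (Set.Iio (n * k)))
    (U : Matrix (Fin n × Fin k) (Fin n × Fin k) ℝ) (hU : U * Uᵀ = 1)
    (hAW : mwAdj n k W =
      U * Matrix.diagonal (fun p => mu (finProdFinEquiv p)) * Uᵀ)
    (nu : ℕ → ℝ) (hnu : AntitoneOn nu (Set.Iio n))
    (Ug : Matrix (Fin n) (Fin n) ℝ) (hUg : Ug * Ugᵀ = 1)
    (hAG : G.adjMatrix ℝ = Ug * Matrix.diagonal (fun v : Fin n => nu v) * Ugᵀ) :
    ((ℓ : ℝ) / k) * nu 1 ≤ mu k := by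
  obtain ⟨x, hx0, hx1, hxA⟩ :=
    exists_ne_zero_dotProduct_eq_zero_le (Equiv.refl (Fin n)) hnu hUg hAG (by omega) 1
  have hxx : 0 < x ⬝ᵥ x := dotProduct_self_pos_iff.mpr hx0
  have hnu_le : nu 1 ≤ r :=
    le_of_mul_le_mul_right (hxA.trans (hGreg.dotProduct_adjMatrix_mulVec_le x)) hxx
  have htrace : ∀ u v, (W u v).trace = ((ℓ : ℝ) • G.adjMatrix ℝ) u v := fun u v => by
    by_cases h : G.Adj u v <;> simp [h, hrank, h0]
  obtain ⟨i, -, hi⟩ := Finset.exists_le_of_sum_le (univ_nonempty_iff.mpr ⟨⟨0, hk⟩⟩)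
    (f := fun _ => ℓ / k * nu 1 * (x ⬝ᵥ x))
    (g := fun i => vecTensor x (Pi.single i 1) ⬝ᵥ mwAdj n k W *ᵥ vecTensor x (Pi.single i 1)) <| by
      rw [sum_vecTensor_single_dotProduct_mwAdj_mulVec W htrace, sum_const, card_univ,
        Fintype.card_fin, nsmul_eq_mul, smul_mulVec, dotProduct_smul, smul_eq_mul]
      field_simp
      nlinarith
  have htd : (ℓ : ℝ) / k * nu 1 ≤ r * ℓ / k := by
    rw [mul_comm (r : ℝ), mul_div_right_comm]
    exact mul_le_mul_of_nonneg_left hnu_le (by positivity)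
  have hf := oneTensorAddSMulTensor_injective (y := Pi.single i 1) hx1 hx0 (by simp)
  exact le_of_forall_mem_le_dotProduct_mulVec finProdFinEquiv hmu hU hAW
    (LinearMap.range (oneTensorAddSMulTensor x (Pi.single i 1)))
    (by simp [LinearMap.finrank_range_of_inj hf])
    (mul_dotProduct_self_le_dotProduct_mwAdj_mulVec W
      (hAW ▸ isSymm_mul_diagonal_mul_transpose _ _) hdreg hx1 htd (by simpa using hi))

/-- Alon–Boppana-type lower bound for matrix-weighted graphs: if `G` is an
`r`-regular graph whose matrix weights on edges are rank-`ℓ` orthogonal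
projections and the matrix weighting is `d`-regular with `d = rℓ/k`, then
`μ_{k+1}(A_W) ≥ (ℓ/k) μ_2(A_G)`.  Here `mu` (resp. `nu`) enumerates the
eigenvalues of the matrix-weighted adjacency matrix `A_W` (resp. of the 0–1
adjacency matrix `A_G` of `G`) in decreasing order (0-indexed), witnessed by
orthogonal spectral decompositions. -/
theorem matrix_weighted_alon_boppana_comparison
    (n k r ℓ : ℕ) (hn : 2 ≤ n) (hk : 0 < k)
    (G : SimpleGraph (Fin n)) [DecidableRel G.Adj]
    (hGreg : G.IsRegularOfDegree r)
    (W : Fin n → Fin n → Matrix (Fin k) (Fin k) ℝ)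
    (hpsd : ∀ u v, (W u v).PosSemidef)
    (hsym : ∀ u v, W u v = W v u)
    (h0 : ∀ u v, ¬ G.Adj u v → W u v = 0)
    (hproj : ∀ u v, G.Adj u v → W u v * W u v = W u v)
    (hrank : ∀ u v, G.Adj u v → (W u v).trace = (ℓ : ℝ))
    (hdreg : ∀ v : Fin n, ∑ u, W u v =
      ((r : ℝ) * ℓ / k) • (1 : Matrix (Fin k) (Fin k) ℝ))
    (mu : ℕ → ℝ) (hmu : AntitoneOn mu (Set.Iio (n * k)))
    (U : Matrix (Fin n × Fin k) (Fin n × Fin k) ℝ) (hU : U * Uᵀ = 1)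
    (hAW : mwAdj n k W =
      U * Matrix.diagonal (fun p => mu (finProdFinEquiv p)) * Uᵀ)
    (nu : ℕ → ℝ) (hnu : AntitoneOn nu (Set.Iio n))
    (Ug : Matrix (Fin n) (Fin n) ℝ) (hUg : Ug * Ugᵀ = 1)
    (hAG : G.adjMatrix ℝ = Ug * Matrix.diagonal (fun v : Fin n => nu v) * Ugᵀ) :
    ((ℓ : ℝ) / k) * nu 1 ≤ mu k :=
  matrix_weighted_alon_boppana_comparison_general n k r ℓ hn hk G hGreg W h0 hrank hdreg mu hmu U hU
    hAW nu hnu Ug hUg hAG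
end
end
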